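/- arXiv:2206.05884 — 2 statements merged into one kernel-verified Lean document; each statement's English description precedes it below -/
import Mathlib

section
/- For t ≥ 2 with t+2 ≡ 1 or 3 (mod 6) and n divisible by t+2, ex_3(n, Tr(K_{1,t})) = n(t²−1)/6. -/
/-- `H` contains the star `K_{1,t}` as a trace. -/
def HasStarTrace (t : ℕ) {V : Type*} [DecidableEq V] (H : Finset (Finset V)) : Prop :=
  ∃ (w0 : V) (w : Fin t → V) (f : Fin t → Finset V),
    Function.Injective w ∧ (∀ i, w i ≠ w0) ∧ Function.Injective f ∧
    (∀ i, f i ∈ H) ∧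
    ∀ i, f i ∩ insert w0 (Finset.image w Finset.univ) = {w0, w i}

/-!
Upper bound. In the link graph `L_v` of a vertex `v`, a set `W` in which every vertex has a
neighbour outside `W` yields a trace of `K_{1,|W|}` centred at `v`, so all such sets have fewer
than `t` vertices. A Vizing-type bound then gives `2 deg v ≤ (t - 1)(t + 1)`, and summing over
`v` gives `6|H| ≤ n(t² - 1)`.

Construction. Split the `n` vertices into blocks of `t + 2` and take, in each block, all triples
not in a Steiner triple system (Bose's construction for `t + 2 ≡ 3`, Skolem's for
`t + 2 ≡ 1 (mod 6)`). A trace of `K_{1,t}` centred at `w₀` spans `t + 1` vertices of one block,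
so all its edges contain the remaining vertex `u`, and then the system's triple through `w₀`
and `u` would be one of its edges.
-/

open Finset

namespace SimpleGraph

variable {V : Type*} (G : SimpleGraph V)

def IsEscaping (W : Finset V) : Prop := ∀ w ∈ W, ∃ b ∉ W, G.Adj w b

theorem isEscaping_neighborFinset [Fintype V] [DecidableRel G.Adj] (v : V) :
    G.IsEscaping (G.neighborFinset v) :=
  fun w hw => ⟨v, G.notMem_neighborFinset_self v, ((G.mem_neighborFinset v w).1 hw).symm⟩

def awayFrom (S : Finset V) : SimpleGraph V where
  Adj a b := G.Adj a b ∧ a ∉ S ∧ b ∉ S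
  symm := ⟨fun _ _ h => ⟨h.1.symm, h.2.2, h.2.1⟩⟩
  loopless := ⟨fun _ h => h.1.ne rfl⟩

@[simp]
theorem awayFrom_adj {S : Finset V} {a b : V} :
    (G.awayFrom S).Adj a b ↔ G.Adj a b ∧ a ∉ S ∧ b ∉ S :=
  Iff.rfl

instance [DecidableEq V] [DecidableRel G.Adj] (S : Finset V) : DecidableRel (G.awayFrom S).Adj :=
  fun a b => inferInstanceAs (Decidable (G.Adj a b ∧ a ∉ S ∧ b ∉ S))

variable [Fintype V] [DecidableEq V] [DecidableRel G.Adj]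

theorem isEscaping_union {a b : V} {A B : Finset V} (hA : A ⊆ G.neighborFinset a)
    (hB : B ⊆ G.neighborFinset b) (ha : a ∉ A ∪ B) (hb : b ∉ A ∪ B) :
    G.IsEscaping (A ∪ B) := by
  intro w hw
  rcases mem_union.1 hw with hw | hw
  · exact ⟨a, ha, ((G.mem_neighborFinset a w).1 (hA hw)).symm⟩
  · exact ⟨b, hb, ((G.mem_neighborFinset b w).1 (hB hw)).symm⟩

theorem IsEscaping.union_neighborFinset {v : V} {W : Finset V}
    (hW : (G.awayFrom (insert v (G.neighborFinset v))).IsEscaping W) :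
    G.IsEscaping (W ∪ G.neighborFinset v) ∧ Disjoint W (G.neighborFinset v) := by
  have hWS : ∀ w ∈ W, w ∉ insert v (G.neighborFinset v) := fun w hw => by
    obtain ⟨b, -, -, hw, -⟩ := hW w hw
    exact hw
  refine ⟨fun w hw => ?_, Finset.disjoint_left.2 fun _ hw hN => hWS _ hw (mem_insert_of_mem hN)⟩
  rcases mem_union.1 hw with hw | hw
  · obtain ⟨b, hbW, hwb, -, hb⟩ := hW w hw
    exact ⟨b, by simp_all, hwb⟩
  · refine ⟨v, ?_, ((G.mem_neighborFinset v w).1 hw).symm⟩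
    simp only [mem_union, G.notMem_neighborFinset_self, or_false]
    exact fun hv => hWS v hv (mem_insert_self _ _)

theorem degree_awayFrom {S : Finset V} {x : V} (hx : x ∉ S) :
    (G.awayFrom S).degree x = #(G.neighborFinset x \ S) := by
  rw [← card_neighborFinset_eq_degree]
  congr 1
  ext y
  simp [hx]

theorem degree_awayFrom_of_mem {S : Finset V} {x : V} (hx : x ∈ S) :
    (G.awayFrom S).degree x = 0 := by
  rw [← card_neighborFinset_eq_degree, card_eq_zero]
  ext y
  simp [hx]

theorem sum_degree_eq_sum_degree_awayFrom_add (S : Finset V) :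
    ∑ x, G.degree x = ∑ x, (G.awayFrom S).degree x +
      ∑ x ∈ S, (G.degree x + #(G.neighborFinset x \ S)) := by
  have hcross :
      ∑ x ∈ Sᶜ, #(G.neighborFinset x ∩ S) = ∑ y ∈ S, #(G.neighborFinset y \ S) := by
    convert sum_card_bipartiteAbove_eq_sum_card_bipartiteBelow (s := Sᶜ) (t := S) (r := G.Adj)
      using 3 with x - y -
    · ext; simp [bipartiteAbove, and_comm]
    · ext; simp [bipartiteBelow, adj_comm, and_comm]
  rw [← sum_add_sum_compl S fun x => G.degree x,
    ← sum_add_sum_compl S fun x => (G.awayFrom S).degree x, sum_add_distrib, ← hcross,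
    sum_congr rfl fun x hx => G.degree_awayFrom_of_mem hx,
    sum_congr rfl fun x hx => G.degree_awayFrom (mem_compl.1 hx), sum_const_zero, zero_add]
  have hsplit : ∑ x ∈ Sᶜ, G.degree x =
      ∑ x ∈ Sᶜ, #(G.neighborFinset x \ S) + ∑ x ∈ Sᶜ, #(G.neighborFinset x ∩ S) := by
    rw [← sum_add_distrib]
    exact sum_congr rfl fun x _ => (card_sdiff_add_card_inter _ _).symm
  omega

/-- `W` is escaping iff `Wᶜ` dominates `W`, so the largest escaping set has `|V| - γ(G)` vertices
and this is Vizing's bound `2e ≤ (n - γ)(n - γ + 2)`. -/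
theorem sum_degree_le_of_forall_isEscaping_card_le (s : ℕ)
    (h : ∀ W, G.IsEscaping W → #W ≤ s) : ∑ x, G.degree x ≤ s * (s + 2) := by
  induction s using Nat.strong_induction_on generalizing G with
  | _ s ih =>
  by_cases hG : ∀ x, G.degree x = 0
  · simp [hG]
  push Not at hG
  obtain ⟨v, hv⟩ := hG
  have hvN : v ∉ G.neighborFinset v := G.notMem_neighborFinset_self v
  have hd : G.degree v ≤ s := h _ (G.isEscaping_neighborFinset v)
  obtain ⟨a, rfl⟩ : ∃ a, s = a + G.degree v := ⟨s - G.degree v, by omega⟩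
  have hrest : ∑ x, (G.awayFrom (insert v (G.neighborFinset v))).degree x ≤ a * (a + 2) := by
    refine ih a (by omega) _ fun W hW => ?_
    obtain ⟨hesc, hdisj⟩ := IsEscaping.union_neighborFinset G hW
    have := h _ hesc
    rw [card_union_of_disjoint hdisj, card_neighborFinset_eq_degree] at this
    omega
  -- Deleting the edges at `N[v]` lowers the degree sum by `d + ∑_{y ∈ N(v)} (deg y + out y)`,
  -- `out y = |N(y) \ N[v]|`; each summand is bounded because `N(y)` and
  -- `(N(v) \ {y}) ∪ (N(y) \ N[v])` are escaping.
  have hlocal : ∀ y ∈ G.neighborFinset v, G.degree y +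
      #(G.neighborFinset y \ insert v (G.neighborFinset v)) + G.degree v ≤
        2 * (a + G.degree v) + 1 := by
    intro y hy
    have hdeg := h _ (G.isEscaping_neighborFinset y)
    have hesc := G.isEscaping_union (a := v) (b := y) (erase_subset y _)
      (sdiff_subset (s := G.neighborFinset y) (t := insert v (G.neighborFinset v)))
      (by simp [hvN]) (by simp [hy])
    have hout := h _ hesc
    rw [card_union_of_disjoint (disjoint_sdiff_self_right.mono_left ((erase_subset y _).trans
      (subset_insert v _))), card_erase_of_mem hy, card_neighborFinset_eq_degree] at hout
    rw [card_neighborFinset_eq_degree] at hdeg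
    omega
  have hsum := G.sum_degree_eq_sum_degree_awayFrom_add (insert v (G.neighborFinset v))
  rw [sum_insert hvN, sdiff_eq_empty_iff_subset.2 (subset_insert v _), card_empty,
    add_zero] at hsum
  have hN := sum_le_sum hlocal
  rw [sum_add_distrib, sum_const, sum_const, smul_eq_mul, smul_eq_mul,
    card_neighborFinset_eq_degree] at hN
  nlinarith

end SimpleGraph

section Link

variable {α : Type*} [DecidableEq α]

theorem sum_card_filter_mem [Fintype α] (B : Finset (Finset α)) :
    ∑ a, #{b ∈ B | a ∈ b} = ∑ b ∈ B, #b := by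
  simp_rw [card_filter]
  rw [sum_comm]
  simp

theorem exists_eq_triple_of_card_eq_three {e : Finset α} (he : #e = 3) {a b : α} (ha : a ∈ e)
    (hb : b ∈ e) (hab : a ≠ b) : ∃ c, c ≠ a ∧ c ≠ b ∧ e = {a, b, c} := by
  obtain ⟨c, hc⟩ := card_eq_one.1 (show #((e.erase a).erase b) = 1 by
    rw [card_erase_of_mem (mem_erase.2 ⟨hab.symm, hb⟩), card_erase_of_mem ha, he])
  have hce : c ∈ (e.erase a).erase b := hc ▸ mem_singleton_self c
  simp only [mem_erase] at hce
  refine ⟨c, hce.2.1, hce.1, (eq_of_subset_of_card_le (fun x hx => ?_) ?_).symm⟩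
  · simp only [mem_insert, mem_singleton] at hx
    rcases hx with rfl | rfl | rfl <;> simp_all
  · rw [he, card_eq_three.2 ⟨a, b, c, hab, Ne.symm hce.2.1, Ne.symm hce.1, rfl⟩]

def linkGraph (H : Finset (Finset α)) (v : α) : SimpleGraph α where
  Adj a b := a ≠ b ∧ {v, a, b} ∈ H
  symm := ⟨fun a b h => ⟨h.1.symm, by rw [pair_comm]; exact h.2⟩⟩
  loopless := ⟨fun _ h => h.1 rfl⟩

variable {H : Finset (Finset α)} {v : α}

instance : DecidableRel (linkGraph H v).Adj :=
  fun a b => inferInstanceAs (Decidable (a ≠ b ∧ _))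

theorem ne_of_linkGraph_adj (hH : ∀ e ∈ H, #e = 3) {a b : α} (h : (linkGraph H v).Adj a b) :
    v ≠ a ∧ v ≠ b := by
  have h3 := hH _ h.2
  have h2 := card_le_two (a := a) (b := b)
  refine ⟨fun hva => ?_, fun hvb => ?_⟩
  · rw [hva, insert_eq_of_mem (mem_insert_self _ _)] at h3
    omega
  · rw [hvb, insert_eq_of_mem (mem_insert_of_mem (mem_singleton_self _))] at h3
    omega

theorem degree_linkGraph [Fintype α] (hH : ∀ e ∈ H, #e = 3) {a : α} (ha : a ≠ v) :
    (linkGraph H v).degree a = #{e ∈ H | v ∈ e ∧ a ∈ e} := by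
  rw [← SimpleGraph.card_neighborFinset_eq_degree]
  refine card_nbij (fun b => {v, a, b}) (fun b hb => ?_) (fun b hb b' hb' hbb' => ?_) ?_
  · have hadj := (SimpleGraph.mem_neighborFinset _ _ _).1 hb
    simpa using hadj.2
  · have hadj := (SimpleGraph.mem_neighborFinset _ _ _).1 (mem_coe.1 hb)
    have hadj' := (SimpleGraph.mem_neighborFinset _ _ _).1 (mem_coe.1 hb')
    have hmem : b ∈ ({v, a, b'} : Finset α) := by
      rw [← show ({v, a, b} : Finset α) = {v, a, b'} from hbb']
      simp
    simp only [mem_insert, mem_singleton] at hmem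
    rcases hmem with h | h | h
    · exact absurd h.symm (ne_of_linkGraph_adj hH hadj).2
    · exact absurd h.symm hadj.1
    · exact h
  · intro e he
    obtain ⟨heH, hve, hae⟩ := mem_filter.1 (mem_coe.1 he)
    obtain ⟨b, -, hba, rfl⟩ := exists_eq_triple_of_card_eq_three (hH e heH) hve hae ha.symm
    exact ⟨b, mem_coe.2 ((SimpleGraph.mem_neighborFinset _ _ _).2 ⟨hba.symm, heH⟩), rfl⟩

theorem sum_degree_linkGraph [Fintype α] (hH : ∀ e ∈ H, #e = 3) :
    ∑ a, (linkGraph H v).degree a = 2 * #{e ∈ H | v ∈ e} := by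
  have hcount : ∑ a, #{e ∈ {e ∈ H | v ∈ e} | a ∈ e} = 3 * #{e ∈ H | v ∈ e} := by
    rw [sum_card_filter_mem, sum_congr rfl fun e he => hH e (mem_filter.1 he).1, sum_const,
      smul_eq_mul, mul_comm]
  have hself : (linkGraph H v).degree v = 0 := by
    rw [← SimpleGraph.card_neighborFinset_eq_degree, card_eq_zero, eq_empty_iff_forall_notMem]
    exact fun b hb => (ne_of_linkGraph_adj hH ((SimpleGraph.mem_neighborFinset _ _ _).1 hb)).1 rfl
  rw [← add_sum_erase _ _ (mem_univ v)] at hcount ⊢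
  rw [hself, zero_add, sum_congr rfl fun a ha => degree_linkGraph hH (ne_of_mem_erase ha)]
  simp only [filter_filter, and_self] at hcount
  omega

end Link

section UpperBound

variable {α : Type*} [DecidableEq α] {H : Finset (Finset α)}

theorem hasStarTrace_of_isEscaping (hH : ∀ e ∈ H, #e = 3) {t : ℕ} {v : α} {W : Finset α}
    (hW : (linkGraph H v).IsEscaping W) (ht : t ≤ #W) : HasStarTrace t H := by
  let e : Fin t ↪ W := (Fin.castLEEmb ht).trans W.equivFin.symm.toEmbedding
  let w : Fin t → α := fun i => e i
  have hwW : ∀ i, w i ∈ W := fun i => (e i).2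
  have hw : Function.Injective w := Subtype.val_injective.comp e.injective
  choose b hbW hadj using fun i => hW (w i) (hwW i)
  have hv : ∀ i, v ≠ w i ∧ v ≠ b i := fun i => ne_of_linkGraph_adj hH (hadj i)
  refine ⟨v, w, fun i => {v, w i, b i}, hw, fun i => (hv i).1.symm, fun i j hij => ?_,
    fun i => (hadj i).2, fun i => ?_⟩
  · have hwi : w i ∈ ({v, w j, b j} : Finset α) := by
      rw [← show ({v, w i, b i} : Finset α) = {v, w j, b j} from hij]
      simp
    simp only [mem_insert, mem_singleton] at hwi
    rcases hwi with h | h | h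
    · exact absurd h.symm (hv i).1
    · exact hw h
    · exact absurd (h ▸ hwW i) (hbW j)
  · ext z
    simp only [mem_inter, mem_insert, mem_singleton, mem_image, mem_univ, true_and]
    constructor
    · rintro ⟨rfl | rfl | rfl, hz⟩
      · exact Or.inl rfl
      · exact Or.inr rfl
      · rcases hz with h | ⟨j, hj⟩
        · exact absurd h.symm (hv i).2
        · exact absurd (hj ▸ hwW j) (hbW i)
    · rintro (rfl | rfl)
      · exact ⟨Or.inl rfl, Or.inl rfl⟩
      · exact ⟨Or.inr (Or.inl rfl), Or.inr ⟨i, rfl⟩⟩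

theorem six_mul_card_le_of_not_hasStarTrace [Fintype α] (hH : ∀ e ∈ H, #e = 3) {t : ℕ}
    (h : ¬HasStarTrace t H) :
    6 * #H ≤ Fintype.card α * (t ^ 2 - 1) := by
  have hlink : ∀ v, 2 * #{e ∈ H | v ∈ e} ≤ t ^ 2 - 1 := fun v => by
    have hesc : ∀ W, (linkGraph H v).IsEscaping W → #W ≤ t - 1 := fun W hW => by
      by_contra hlt
      exact h (hasStarTrace_of_isEscaping hH hW (by omega))
    have := (linkGraph H v).sum_degree_le_of_forall_isEscaping_card_le (t - 1) hesc
    rw [sum_degree_linkGraph hH] at this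
    rcases Nat.eq_zero_or_pos t with rfl | ht
    · simpa using this
    · convert this using 1
      zify [ht, Nat.one_le_pow 2 t ht]
      ring
  calc 6 * #H = 2 * ∑ v, #{e ∈ H | v ∈ e} := by
        rw [sum_card_filter_mem, sum_congr rfl hH, sum_const, smul_eq_mul]
        ring
    _ ≤ ∑ _v : α, (t ^ 2 - 1) := by
        rw [mul_sum]
        exact sum_le_sum fun v _ => hlink v
    _ = Fintype.card α * (t ^ 2 - 1) := by rw [sum_const, card_univ, smul_eq_mul]

end UpperBound

section Transfer

variable {α β : Type*} [DecidableEq α] [DecidableEq β] {t : ℕ}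

theorem HasStarTrace.of_map (ht : t ≠ 0) (φ : α ↪ β) {H : Finset (Finset α)}
    (h : HasStarTrace t (H.map (mapEmbedding φ).toEmbedding)) : HasStarTrace t H := by
  obtain ⟨w0, w, f, hw, hw0, hf, hfH, htr⟩ := h
  choose g hgH hg using fun i => mem_map.1 (hfH i)
  simp only [RelEmbedding.coe_toEmbedding, mapEmbedding_apply] at hg
  have hmem : ∀ i, {w0, w i} ⊆ map φ (g i) := fun i => hg i ▸ htr i ▸ inter_subset_left
  choose x _ hx using fun i => mem_map.1 (hmem i (mem_insert_of_mem (mem_singleton_self _)))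
  obtain ⟨x0, -, hx0⟩ := mem_map.1 (hmem ⟨0, Nat.pos_of_ne_zero ht⟩ (mem_insert_self _ _))
  refine ⟨x0, x, g, fun i j hij => hw (by rw [← hx i, ← hx j, hij]),
    fun i hi => hw0 i (by rw [← hx i, hi, hx0]),
    fun i j hij => hf (by rw [← hg i, ← hg j, hij]),
    hgH, fun i => map_injective φ ?_⟩
  have himage : (image x univ).map φ = image w univ := by
    rw [map_eq_image, image_image]
    exact image_congr fun i _ => hx i
  rw [map_inter, map_insert, himage, hx0, hg, htr, map_insert, map_singleton, hx0, hx]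

end Transfer

section Copies

def disjointCopies {V : Type*} [DecidableEq V] (G : Finset (Finset V)) (ι : Type*) [Fintype ι]
    [DecidableEq ι] : Finset (Finset (V × ι)) :=
  univ.biUnion fun j => G.map (mapEmbedding (Function.Embedding.sectL V j)).toEmbedding

variable {V ι : Type*} [DecidableEq V] [DecidableEq ι] [Fintype ι] {t : ℕ}
  {G : Finset (Finset V)}

theorem mem_disjointCopies {e : Finset (V × ι)} :
    e ∈ disjointCopies G ι ↔ ∃ j, ∃ g ∈ G, g.map (Function.Embedding.sectL V j) = e := by
  simp [disjointCopies]

theorem card_of_mem_disjointCopies {k : ℕ} (hG : ∀ g ∈ G, #g = k) :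
    ∀ e ∈ disjointCopies G ι, #e = k := by
  intro e he
  obtain ⟨j, g, hg, rfl⟩ := mem_disjointCopies.1 he
  rw [card_map, hG g hg]

theorem card_disjointCopies (hG : ∅ ∉ G) : #(disjointCopies G ι) = Fintype.card ι * #G := by
  rw [disjointCopies, card_biUnion, sum_congr rfl fun j _ => card_map _, sum_const, card_univ,
    smul_eq_mul]
  intro j _ j' _ hjj'
  refine Finset.disjoint_left.2 fun e hej hej' => hjj' ?_
  obtain ⟨g, hg, rfl⟩ := mem_map.1 hej
  obtain ⟨g', -, hgg'⟩ := mem_map.1 hej'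
  obtain ⟨x, hx⟩ := nonempty_iff_ne_empty.2 (ne_of_mem_of_not_mem hg hG)
  have hxj := mem_map_of_mem (Function.Embedding.sectL V j) hx
  simp only [RelEmbedding.coe_toEmbedding, mapEmbedding_apply] at hgg'
  rw [← hgg', mem_map] at hxj
  obtain ⟨y, -, hy⟩ := hxj
  exact (congrArg Prod.snd hy).symm

theorem not_hasStarTrace_disjointCopies (ht : t ≠ 0) (hG : ¬HasStarTrace t G) :
    ¬HasStarTrace t (disjointCopies G ι) := by
  rintro ⟨w0, w, f, hw, hw0, hf, hfH, htr⟩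
  refine hG (HasStarTrace.of_map ht (Function.Embedding.sectL V w0.2)
    ⟨w0, w, f, hw, hw0, hf, fun i => ?_, htr⟩)
  obtain ⟨j, g, hg, hgf⟩ := mem_disjointCopies.1 (hfH i)
  have hw0f : w0 ∈ f i := (htr i ▸ inter_subset_left : {w0, w i} ⊆ f i) (mem_insert_self _ _)
  rw [← hgf, mem_map] at hw0f
  obtain ⟨x, -, rfl⟩ := hw0f
  exact mem_map.2 ⟨g, hg, by simpa using hgf⟩

end Copies

section TripleCover

variable {V : Type*}

/-- With `6 * #T ≤ v * (v - 1)` on `v` points, counting pairs shows that a triple cover is a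
Steiner triple system. -/
def IsTripleCover (T : Finset (Finset V)) : Prop :=
  (∀ e ∈ T, #e = 3) ∧ ∀ a b, a ≠ b → ∃ e ∈ T, a ∈ e ∧ b ∈ e

theorem IsTripleCover.map_equiv {W : Type*} {T : Finset (Finset V)}
    (hT : IsTripleCover T) (φ : V ≃ W) :
    IsTripleCover (T.map (mapEmbedding φ.toEmbedding).toEmbedding) := by
  refine ⟨fun e he => ?_, fun a b hab => ?_⟩
  · obtain ⟨g, hg, rfl⟩ := mem_map.1 he
    simpa using hT.1 g hg
  · obtain ⟨e, he, ha, hb⟩ := hT.2 (φ.symm a) (φ.symm b) (φ.symm.injective.ne hab)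
    exact ⟨e.map φ.toEmbedding, mem_map_of_mem _ he, by simpa using ha, by simpa using hb⟩

theorem not_hasStarTrace_powersetCard_sdiff [Fintype V] [DecidableEq V] {T : Finset (Finset V)}
    {t : ℕ} (hT : IsTripleCover T) (hV : Fintype.card V ≤ t + 2) (ht : t ≠ 0) :
    ¬HasStarTrace t ((univ : Finset V).powersetCard 3 \ T) := by
  rintro ⟨w0, w, f, hw, hw0, hf, hfG, htr⟩
  set S := insert w0 (image w univ)
  have hS : #S = t + 1 := by
    rw [card_insert_of_notMem (by simpa using hw0), card_image_of_injective _ hw, card_univ,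
      Fintype.card_fin]
  have hSc : ∀ x ∉ S, ∀ y ∉ S, x = y := by
    have : #Sᶜ ≤ 1 := by rw [card_compl]; omega
    simpa using card_le_one.1 this
  have hfT : ∀ i, f i ∉ T := fun i => (mem_sdiff.1 (hfG i)).2
  have hthird : ∀ i, ∃ u ∉ S, f i = {w0, w i, u} := fun i => by
    have hpair : {w0, w i} ⊆ f i := htr i ▸ inter_subset_left
    obtain ⟨u, hu0, hui, hfu⟩ := exists_eq_triple_of_card_eq_three
      (mem_powersetCard.1 (mem_sdiff.1 (hfG i)).1).2 (hpair (mem_insert_self _ _))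
      (hpair (by simp)) (hw0 i).symm
    refine ⟨u, fun huS => ?_, hfu⟩
    have : u ∈ f i ∩ S := mem_inter.2 ⟨by simp [hfu], huS⟩
    rw [htr i] at this
    simp_all
  choose u huS hfu using hthird
  let i0 : Fin t := ⟨0, Nat.pos_of_ne_zero ht⟩
  have hw0S : w0 ∈ S := mem_insert_self _ _
  obtain ⟨τ, hτT, hw0τ, huτ⟩ := hT.2 w0 (u i0) (ne_of_mem_of_not_mem hw0S (huS i0))
  obtain ⟨y, hyw0, hyu, rfl⟩ := exists_eq_triple_of_card_eq_three (hT.1 τ hτT) hw0τ huτ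
    (ne_of_mem_of_not_mem hw0S (huS i0))
  have hyS : y ∈ S := by
    by_contra hyS
    exact hyu (hSc y hyS (u i0) (huS i0))
  obtain ⟨j, -, rfl⟩ := mem_image.1 ((mem_insert.1 hyS).resolve_left hyw0)
  refine hfT j ?_
  rw [hfu j, hSc (u j) (huS j) (u i0) (huS i0), pair_comm (w j)]
  exact hτT

end TripleCover

section CrossTriples

variable {Q : Type*} [Fintype Q] [DecidableEq Q] (op : Q → Q → Q)

/-- The mixed triples of the Bose and Skolem constructions. -/
def crossTriples : Finset (Finset (Q × ZMod 3)) :=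
  (univ.offDiag ×ˢ univ).image fun p : (Q × Q) × ZMod 3 =>
    {(p.1.1, p.2), (p.1.2, p.2), (op p.1.1 p.1.2, p.2 + 1)}

theorem mem_crossTriples {x y : Q} (hxy : x ≠ y) (i : ZMod 3) :
    {(x, i), (y, i), (op x y, i + 1)} ∈ crossTriples op :=
  mem_image.2 ⟨((x, y), i), by simp [hxy], rfl⟩

theorem card_of_mem_crossTriples : ∀ e ∈ crossTriples op, #e = 3 := by
  intro e he
  obtain ⟨⟨⟨x, y⟩, i⟩, hp, rfl⟩ := mem_image.1 he
  have hxy : x ≠ y := by simpa using hp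
  exact card_eq_three.2 ⟨_, _, _, by simp [hxy], by simp, by simp, rfl⟩

theorem two_mul_card_crossTriples_le (hcomm : ∀ x y, op x y = op y x) :
    2 * #(crossTriples op) ≤ 3 * (Fintype.card Q * Fintype.card Q - Fintype.card Q) := by
  have h := mul_card_image_le_card (f := fun p : (Q × Q) × ZMod 3 =>
    ({(p.1.1, p.2), (p.1.2, p.2), (op p.1.1 p.1.2, p.2 + 1)} : Finset (Q × ZMod 3)))
    ((univ : Finset Q).offDiag ×ˢ (univ : Finset (ZMod 3))) 2 ?_
  · rw [card_product, offDiag_card, card_univ, card_univ, ZMod.card] at h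
    rw [crossTriples]
    omega
  · intro b hb
    obtain ⟨⟨⟨x, y⟩, i⟩, hp, rfl⟩ := mem_image.1 hb
    have hxy : x ≠ y := by simpa using hp
    refine le_of_eq_of_le (card_pair (a := ((x, y), i)) (b := ((y, x), i)) (by simp [hxy])).symm
      (card_le_card fun q hq => ?_)
    rcases mem_insert.1 hq with rfl | hq
    · simpa using hp
    · rw [mem_singleton.1 hq, mem_filter]
      refine ⟨by simpa using hxy.symm, ?_⟩
      rw [hcomm y x, insert_comm]

variable {op}

theorem exists_mem_crossTriples_of_ne (hsurj : ∀ x z, ∃ y, op x y = z) {p q : Q × ZMod 3}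
    (hpq : p ≠ q) (hp : q ≠ (op p.1 p.1, p.2 + 1)) (hq : p ≠ (op q.1 q.1, q.2 + 1)) :
    ∃ e ∈ crossTriples op, p ∈ e ∧ q ∈ e := by
  have hnext : ∀ p q : Q × ZMod 3, q.2 = p.2 + 1 → q ≠ (op p.1 p.1, p.2 + 1) →
      ∃ e ∈ crossTriples op, p ∈ e ∧ q ∈ e := by
    rintro ⟨x, i⟩ ⟨z, j⟩ rfl hz
    obtain ⟨y, rfl⟩ := hsurj x z
    have hxy : x ≠ y := by rintro rfl; exact hz rfl
    exact ⟨_, mem_crossTriples op hxy i, by simp, by simp⟩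
  obtain ⟨x, i⟩ := p
  obtain ⟨z, j⟩ := q
  rcases (by decide : ∀ i j : ZMod 3, j = i ∨ j = i + 1 ∨ i = j + 1) i j with rfl | h | h
  · have hxz : x ≠ z := by rintro rfl; exact hpq rfl
    exact ⟨_, mem_crossTriples op hxz j, by simp, by simp⟩
  · exact hnext _ _ h hp
  · obtain ⟨e, he, hq, hp⟩ := hnext _ _ h hq
    exact ⟨e, he, hp, hq⟩

end CrossTriples

section Bose

variable (m : ℕ) [NeZero m]

def boseTriples : Finset (Finset (ZMod m × ZMod 3)) :=
  crossTriples (fun x y : ZMod m => (x + y) * 2⁻¹) ∪ univ.image fun x => {x} ×ˢ univ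

variable {m}

theorem isTripleCover_boseTriples (hm : Odd m) : IsTripleCover (boseTriples m) := by
  have h2 : (2 : ZMod m) * 2⁻¹ = 1 := by
    exact_mod_cast ZMod.coe_mul_inv_eq_one 2 (Nat.coprime_two_left.2 hm)
  refine ⟨fun e he => ?_, fun p q hpq => ?_⟩
  · rcases mem_union.1 he with he | he
    · exact card_of_mem_crossTriples _ e he
    · obtain ⟨x, -, rfl⟩ := mem_image.1 he
      simp
  · have hvert : ∀ x : ZMod m, {x} ×ˢ univ ∈ boseTriples m := fun x =>
      mem_union_right _ (mem_image_of_mem _ (mem_univ x))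
    by_cases hp : q = ((p.1 + p.1) * 2⁻¹, p.2 + 1)
    · refine ⟨_, hvert p.1, by simp, ?_⟩
      rw [hp]
      simp [show (p.1 + p.1) * 2⁻¹ = p.1 by linear_combination p.1 * h2]
    by_cases hq : p = ((q.1 + q.1) * 2⁻¹, q.2 + 1)
    · refine ⟨_, hvert q.1, ?_, by simp⟩
      rw [hq]
      simp [show (q.1 + q.1) * 2⁻¹ = q.1 by linear_combination q.1 * h2]
    obtain ⟨e, he, hpe, hqe⟩ :=
      exists_mem_crossTriples_of_ne (op := fun x y : ZMod m => (x + y) * 2⁻¹)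
      (fun x z => ⟨2 * z - x, by linear_combination z * h2⟩) hpq hp hq
    exact ⟨e, mem_union_left _ he, hpe, hqe⟩

theorem six_mul_card_boseTriples_le : 6 * #(boseTriples m) ≤ 3 * m * (3 * m - 1) := by
  have hcross := two_mul_card_crossTriples_le (fun x y : ZMod m => (x + y) * 2⁻¹)
    fun x y => by rw [add_comm]
  have hvert := card_image_le (s := (univ : Finset (ZMod m)))
    (f := fun x => ({x} ×ˢ univ : Finset (ZMod m × ZMod 3)))
  have hunion := card_union_le (crossTriples fun x y : ZMod m => (x + y) * 2⁻¹)
    (univ.image fun x => ({x} ×ˢ univ : Finset (ZMod m × ZMod 3)))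
  rw [ZMod.card] at hcross
  rw [card_univ, ZMod.card] at hvert
  rw [boseTriples, Nat.mul_sub_one]
  have : m ≤ m * m := Nat.le_mul_self m
  have : 3 * m * (3 * m) = 9 * (m * m) := by ring
  omega

end Bose

section Skolem

/-- `x ∘ y = skolemHalf k (x + y)` is Skolem's half-idempotent commutative quasigroup of order
`2k`: `x ∘ x = x` for `x < k` and `x ∘ x = x - k` otherwise. -/
def skolemHalf (k : ℕ) (z : ZMod (2 * k)) : ZMod (2 * k) :=
  if z.val % 2 = 0 then ((z.val / 2 : ℕ) : ZMod (2 * k))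
  else ((z.val / 2 + k : ℕ) : ZMod (2 * k))

variable (k : ℕ) [NeZero k]

def skolemTriples : Finset (Finset (Option (ZMod (2 * k) × ZMod 3))) :=
  (crossTriples fun x y => skolemHalf k (x + y)).map (mapEmbedding .some).toEmbedding ∪
    (range k).image (fun i : ℕ => ({(i : ZMod (2 * k))} ×ˢ univ).map .some) ∪
    (range k ×ˢ univ).image fun p => {none, some (((k + p.1 : ℕ) : ZMod (2 * k)), p.2),
      some ((p.1 : ZMod (2 * k)), p.2 + 1)}

variable {k}

theorem skolemHalf_surjective : Function.Surjective (skolemHalf k) := by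
  intro z
  have hz := ZMod.val_lt z
  by_cases h : z.val < k
  · refine ⟨((2 * z.val : ℕ) : ZMod (2 * k)), ?_⟩
    rw [skolemHalf, ZMod.val_cast_of_lt (by omega), if_pos (by omega),
      show 2 * z.val / 2 = z.val by omega, ZMod.natCast_zmod_val]
  · refine ⟨((2 * (z.val - k) + 1 : ℕ) : ZMod (2 * k)), ?_⟩
    rw [skolemHalf, ZMod.val_cast_of_lt (by omega), if_neg (by omega),
      show (2 * (z.val - k) + 1) / 2 + k = z.val by omega, ZMod.natCast_zmod_val]

theorem skolemHalf_add_self (x : ZMod (2 * k)) :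
    skolemHalf k (x + x) = ((x.val % k : ℕ) : ZMod (2 * k)) := by
  have hx := ZMod.val_lt x
  have hxx : (x + x).val = 2 * (x.val % k) := by
    rw [ZMod.val_add]
    by_cases h : x.val < k
    · rw [Nat.mod_eq_of_lt (show x.val + x.val < 2 * k by omega), Nat.mod_eq_of_lt h]
      ring
    · rw [Nat.mod_eq_sub_mod (show 2 * k ≤ x.val + x.val by omega),
        Nat.mod_eq_of_lt (show x.val + x.val - 2 * k < 2 * k by omega),
        Nat.mod_eq_sub_mod (show k ≤ x.val by omega),
        Nat.mod_eq_of_lt (show x.val - k < k by omega)]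
      omega
  rw [skolemHalf, hxx, if_pos (by omega), show 2 * (x.val % k) / 2 = x.val % k by omega]

theorem natCast_add_val_mod {x : ZMod (2 * k)} (hx : k ≤ x.val) :
    ((k + x.val % k : ℕ) : ZMod (2 * k)) = x := by
  rw [Nat.mod_eq_sub_mod hx, Nat.mod_eq_of_lt (by have := ZMod.val_lt x; omega),
    Nat.add_sub_cancel' hx, ZMod.natCast_zmod_val]

theorem map_some_mem_skolemTriples {e : Finset (ZMod (2 * k) × ZMod 3)}
    (he : e ∈ crossTriples fun x y => skolemHalf k (x + y)) : e.map .some ∈ skolemTriples k :=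
  mem_union_left _ (mem_union_left _ (mem_map_of_mem _ he))

theorem vertical_mem_skolemTriples {i : ℕ} (hi : i < k) :
    ({(i : ZMod (2 * k))} ×ˢ univ).map .some ∈ skolemTriples k :=
  mem_union_left _ (mem_union_right _ (mem_image_of_mem _ (mem_range.2 hi)))

theorem insert_none_mem_skolemTriples {i : ℕ} (hi : i < k) (l : ZMod 3) :
    {none, some (((k + i : ℕ) : ZMod (2 * k)), l), some ((i : ZMod (2 * k)), l + 1)} ∈
      skolemTriples k :=
  mem_union_right _ (mem_image.2 ⟨(i, l), by simp [hi], rfl⟩)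

theorem card_of_mem_skolemTriples : ∀ e ∈ skolemTriples k, #e = 3 := by
  intro e he
  rcases mem_union.1 he with he | he
  · rcases mem_union.1 he with he | he
    · obtain ⟨g, hg, rfl⟩ := mem_map.1 he
      simpa using card_of_mem_crossTriples _ g hg
    · obtain ⟨i, -, rfl⟩ := mem_image.1 he
      simp
  · obtain ⟨⟨i, l⟩, -, rfl⟩ := mem_image.1 he
    exact card_eq_three.2 ⟨_, _, _, by simp, by simp, by simp, rfl⟩

theorem exists_mem_skolemTriples_none (x : ZMod (2 * k)) (l : ZMod 3) :
    ∃ e ∈ skolemTriples k, none ∈ e ∧ some (x, l) ∈ e := by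
  by_cases h : x.val < k
  · refine ⟨_, insert_none_mem_skolemTriples h (l - 1), by simp, ?_⟩
    rw [ZMod.natCast_zmod_val, sub_add_cancel]
    simp
  · refine ⟨_, insert_none_mem_skolemTriples (Nat.mod_lt x.val (NeZero.pos k)) l, by simp, ?_⟩
    rw [natCast_add_val_mod (by omega)]
    simp

theorem exists_mem_skolemTriples_diag (x : ZMod (2 * k)) (l : ZMod 3) :
    ∃ e ∈ skolemTriples k, some (x, l) ∈ e ∧ some (skolemHalf k (x + x), l + 1) ∈ e := by
  rw [skolemHalf_add_self]
  by_cases h : x.val < k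
  · rw [Nat.mod_eq_of_lt h, ZMod.natCast_zmod_val]
    exact ⟨_, vertical_mem_skolemTriples h, by simp, by simp⟩
  · refine ⟨_, insert_none_mem_skolemTriples (Nat.mod_lt x.val (NeZero.pos k)) l, ?_, by simp⟩
    rw [natCast_add_val_mod (by omega)]
    simp

theorem isTripleCover_skolemTriples : IsTripleCover (skolemTriples k) := by
  refine ⟨card_of_mem_skolemTriples, fun a b hab => ?_⟩
  match a, b with
  | none, none => exact absurd rfl hab
  | none, some (x, l) => exact exists_mem_skolemTriples_none x l
  | some (x, l), none =>
    obtain ⟨e, he, h1, h2⟩ := exists_mem_skolemTriples_none x l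
    exact ⟨e, he, h2, h1⟩
  | some p, some q =>
    by_cases hp : q = (skolemHalf k (p.1 + p.1), p.2 + 1)
    · rw [hp]
      exact exists_mem_skolemTriples_diag p.1 p.2
    by_cases hq : p = (skolemHalf k (q.1 + q.1), q.2 + 1)
    · rw [hq]
      obtain ⟨e, he, h1, h2⟩ := exists_mem_skolemTriples_diag q.1 q.2
      exact ⟨e, he, h2, h1⟩
    have hsurj : ∀ x z, ∃ y, skolemHalf k (x + y) = z := fun x z =>
      let ⟨w, hw⟩ := skolemHalf_surjective z
      ⟨w - x, by rw [add_sub_cancel, hw]⟩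
    obtain ⟨e, he, hpe, hqe⟩ :=
      exists_mem_crossTriples_of_ne hsurj (fun h => hab (congrArg some h)) hp hq
    exact ⟨_, map_some_mem_skolemTriples he, mem_map_of_mem _ hpe, mem_map_of_mem _ hqe⟩

theorem six_mul_card_skolemTriples_le :
    6 * #(skolemTriples k) ≤ (6 * k + 1) * (6 * k + 1 - 1) := by
  have hcross := two_mul_card_crossTriples_le (fun x y : ZMod (2 * k) => skolemHalf k (x + y))
    fun x y => by rw [add_comm]
  rw [ZMod.card] at hcross
  have hvert := card_image_le (s := range k)
    (f := fun i : ℕ =>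
      ({(i : ZMod (2 * k))} ×ˢ univ : Finset (ZMod (2 * k) × ZMod 3)).map .some)
  have hinf := card_image_le (s := range k ×ˢ (univ : Finset (ZMod 3)))
    (f := fun p => ({none, some (((k + p.1 : ℕ) : ZMod (2 * k)), p.2),
      some ((p.1 : ZMod (2 * k)), p.2 + 1)} : Finset (Option (ZMod (2 * k) × ZMod 3))))
  rw [card_range] at hvert
  rw [card_product, card_range, card_univ, ZMod.card] at hinf
  rw [skolemTriples, Nat.add_sub_cancel]
  refine (Nat.mul_le_mul_left 6
    ((card_union_le _ _).trans (Nat.add_le_add_right (card_union_le _ _) _))).trans ?_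
  rw [card_map]
  have : 2 * k * (2 * k) = 4 * (k * k) := by ring
  have : (6 * k + 1) * (6 * k) = 36 * (k * k) + 6 * k := by ring
  have : k ≤ k * k := Nat.le_mul_self k
  omega

end Skolem

theorem exists_tripleCover (V : Type*) [Fintype V] [DecidableEq V]
    (hV : Fintype.card V % 6 = 1 ∨ Fintype.card V % 6 = 3) :
    ∃ T : Finset (Finset V), IsTripleCover T ∧
      6 * #T ≤ Fintype.card V * (Fintype.card V - 1) := by
  rcases hV with hV | hV
  · obtain ⟨k, hk⟩ : ∃ k, Fintype.card V = 6 * k + 1 := ⟨Fintype.card V / 6, by omega⟩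
    rcases Nat.eq_zero_or_pos k with rfl | hk0
    · refine ⟨∅, ⟨by simp, fun a b hab => ?_⟩, by simp⟩
      exact absurd (Fintype.card_le_one_iff.1 (by omega) a b) hab
    have : NeZero k := ⟨hk0.ne'⟩
    let φ : Option (ZMod (2 * k) × ZMod 3) ≃ V := Fintype.equivOfCardEq (by simp [hk]; omega)
    refine ⟨_, isTripleCover_skolemTriples.map_equiv φ, ?_⟩
    rw [card_map, hk]
    exact six_mul_card_skolemTriples_le
  · obtain ⟨m, hm⟩ : ∃ m, Fintype.card V = 3 * m := ⟨Fintype.card V / 3, by omega⟩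
    have hodd : Odd m := Nat.odd_iff.2 (by omega)
    have : NeZero m := ⟨by rintro rfl; simp at hodd⟩
    let φ : ZMod m × ZMod 3 ≃ V := Fintype.equivOfCardEq (by simp [hm]; omega)
    refine ⟨_, (isTripleCover_boseTriples hodd).map_equiv φ, ?_⟩
    rw [card_map, hm]
    exact six_mul_card_boseTriples_le

theorem le_six_mul_card_powersetCard_sdiff {V : Type*} [Fintype V] [DecidableEq V]
    {T : Finset (Finset V)} (hT : 6 * #T ≤ Fintype.card V * (Fintype.card V - 1)) :
    Fintype.card V * (Fintype.card V - 1) * (Fintype.card V - 3) ≤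
      6 * #((univ : Finset V).powersetCard 3 \ T) := by
  have hsdiff := le_card_sdiff T ((univ : Finset V).powersetCard 3)
  rw [card_powersetCard, card_univ] at hsdiff
  generalize Fintype.card V = v at *
  have hchoose : 6 * v.choose 3 = v * (v - 1) * (v - 2) := by
    have := Nat.descFactorial_eq_factorial_mul_choose v 3
    simp only [Nat.descFactorial, Nat.factorial, Nat.sub_zero] at this
    linarith
  rcases lt_or_ge v 3 with hv | hv
  · simp [Nat.sub_eq_zero_of_le hv.le]
  · have : v * (v - 1) * (v - 2) = v * (v - 1) * (v - 3) + v * (v - 1) := by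
      rw [← Nat.mul_add_one]
      congr 1
      omega
    omega

theorem exists_not_hasStarTrace {t : ℕ} (ht : (t + 2) % 6 = 1 ∨ (t + 2) % 6 = 3) (q : ℕ) :
    ∃ H : Finset (Finset (Fin ((t + 2) * q))), (∀ e ∈ H, #e = 3) ∧ ¬HasStarTrace t H ∧
      (t + 2) * q * (t ^ 2 - 1) ≤ 6 * #H := by
  have ht0 : t ≠ 0 := by omega
  obtain ⟨T, hT, hTcard⟩ := exists_tripleCover (Fin (t + 2)) (by simpa using ht)
  set G := (univ : Finset (Fin (t + 2))).powersetCard 3 \ T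
  have hG : ∀ g ∈ G, #g = 3 := fun g hg => (mem_powersetCard.1 (mem_sdiff.1 hg).1).2
  refine ⟨(disjointCopies G (Fin q)).map (mapEmbedding finProdFinEquiv.toEmbedding).toEmbedding,
    fun e he => ?_, fun h => ?_, ?_⟩
  · obtain ⟨g, hg, rfl⟩ := mem_map.1 he
    simpa using card_of_mem_disjointCopies hG g hg
  · exact not_hasStarTrace_disjointCopies ht0
      (not_hasStarTrace_powersetCard_sdiff hT (by simp) ht0) (h.of_map ht0 _)
  · rw [card_map, card_disjointCopies fun h => by simpa using hG ∅ h, Fintype.card_fin]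
    have hG6 : (t + 2) * (t + 1) * (t - 1) ≤ 6 * #G := by
      simpa [show t + 2 - 3 = t - 1 by omega] using le_six_mul_card_powersetCard_sdiff hTcard
    calc (t + 2) * q * (t ^ 2 - 1) = q * ((t + 2) * (t + 1) * (t - 1)) := by
          rw [show t ^ 2 - 1 = (t + 1) * (t - 1) by simpa using Nat.sq_sub_sq t 1]
          ring
      _ ≤ q * (6 * #G) := Nat.mul_le_mul_left q hG6
      _ = 6 * (q * #G) := by ring

theorem stmt_7_general (t n : ℕ) (hmod : (t + 2) % 6 = 1 ∨ (t + 2) % 6 = 3) (hdvd : (t + 2) ∣ n) :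
    (∃ H : Finset (Finset (Fin n)), (∀ e ∈ H, e.card = 3) ∧ ¬ HasStarTrace t H ∧
        6 * H.card = n * (t ^ 2 - 1)) ∧
    ∀ H : Finset (Finset (Fin n)), (∀ e ∈ H, e.card = 3) → ¬ HasStarTrace t H →
      6 * H.card ≤ n * (t ^ 2 - 1) := by
  have hupper : ∀ H : Finset (Finset (Fin n)), (∀ e ∈ H, #e = 3) → ¬HasStarTrace t H →
      6 * #H ≤ n * (t ^ 2 - 1) := fun H hH h => by
    simpa using six_mul_card_le_of_not_hasStarTrace hH h
  refine ⟨?_, hupper⟩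
  obtain ⟨q, rfl⟩ := hdvd
  obtain ⟨H, hH, hHt, hcard⟩ := exists_not_hasStarTrace hmod q
  exact ⟨H, hH, hHt, le_antisymm (hupper H hH hHt) hcard⟩

/-- STATEMENT 6: for `t ≥ 2` with `t+2 ≡ 1 or 3 (mod 6)` and `(t+2) ∣ n`,
`ex_3(n, Tr(K_{1,t})) = n(t²−1)/6` (stated via `6·card`). -/
theorem stmt_7 (t n : ℕ) (ht : 2 ≤ t) (hmod : (t + 2) % 6 = 1 ∨ (t + 2) % 6 = 3) (hdvd : (t + 2) ∣ n) :
    (∃ H : Finset (Finset (Fin n)), (∀ e ∈ H, e.card = 3) ∧ ¬ HasStarTrace t H ∧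
        6 * H.card = n * (t ^ 2 - 1)) ∧
    ∀ H : Finset (Finset (Fin n)), (∀ e ∈ H, e.card = 3) → ¬ HasStarTrace t H →
      6 * H.card ≤ n * (t ^ 2 - 1) :=
  stmt_7_general t n hmod hdvd
end

section
/- Let t ≥ 3 and let B be a 3-uniform hypergraph with no trace of K_{2,t} in which every pair of vertices has co-degree at most 3t−3. Then for any two vertices x, y, the number of common neighbors |N_1(x) ∩ N_1(y)| is at most (t−1)(6t−2). -/
/-- The co-degree of a pair of vertices. -/
def codeg {V : Type*} [DecidableEq V] (H : Finset (Finset V)) (x y : V) : ℕ :=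
  (H.filter fun e => x ∈ e ∧ y ∈ e).card

/-- The 1-neighborhood of `v`: vertices `u ≠ v` lying in a common edge with `v`. -/
def nbhd {V : Type*} [Fintype V] [DecidableEq V] (B : Finset (Finset V)) (v : V) :
    Finset V :=
  Finset.univ.filter fun u => u ≠ v ∧ ∃ e ∈ B, v ∈ e ∧ u ∈ e

/-- `H` contains `K_{2,t}` as a trace. -/
def HasK2tTrace (t : ℕ) {V : Type*} [DecidableEq V] (H : Finset (Finset V)) : Prop :=
  ∃ (x y : V) (u : Fin t → V) (e f : Fin t → Finset V),
    x ≠ y ∧ Function.Injective u ∧ (∀ i, u i ≠ x ∧ u i ≠ y) ∧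
    (∀ i, e i ∈ H) ∧ (∀ i, f i ∈ H) ∧
    Function.Injective e ∧ Function.Injective f ∧ (∀ i j, e i ≠ f j) ∧
    (∀ i, e i ∩ insert x (insert y (Finset.image u Finset.univ)) = {x, u i}) ∧
    (∀ i, f i ∩ insert x (insert y (Finset.image u Finset.univ)) = {y, u i})

private lemma arith_bound (t k : ℕ) (ht : 3 ≤ t) (hk : k < t) :
    3 * k + (3 * t - 3) + (k * (3 * t - 4) + k * (3 * t - 4)) ≤ (t - 1) * (6 * t - 2) := by
  obtain ⟨s, rfl⟩ : ∃ s, t = s + 3 := ⟨t - 3, by omega⟩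
  have h1 : 3 * (s + 3) - 3 = 3 * s + 6 := by omega
  have h2 : 3 * (s + 3) - 4 = 3 * s + 5 := by omega
  have h3 : s + 3 - 1 = s + 2 := by omega
  have h4 : 6 * (s + 3) - 2 = 6 * s + 16 := by omega
  rw [h1, h2, h3, h4]
  have hk' : k ≤ s + 2 := by omega
  nlinarith [Nat.mul_le_mul_right (3 * s + 5) hk']

/-- if `B` is `3`-uniform, `K_{2,t}`-trace-free with co-degrees at most
`3t−3` (`t ≥ 3`), then any two vertices have at most `(t−1)(6t−2)` common neighbors. -/
theorem stmt_12 {V : Type*} [Fintype V] [DecidableEq V] (t : ℕ) (ht : 3 ≤ t)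
    (B : Finset (Finset V)) (h3 : ∀ e ∈ B, e.card = 3)
    (htr : ¬ HasK2tTrace t B)
    (hcodeg : ∀ x y : V, x ≠ y → codeg B x y ≤ 3 * t - 3) :
    ∀ x y : V, x ≠ y → (nbhd B x ∩ nbhd B y).card ≤ (t - 1) * (6 * t - 2) := by
  classical
  intro x y hxy
  by_contra hN
  push_neg at hN
  apply htr
  -- Greedy construction of the trace.
  have key : ∀ k, k ≤ t → ∃ (u : ℕ → V) (e f : ℕ → Finset V),
      (∀ i < k, e i ∈ B ∧ x ∈ e i ∧ u i ∈ e i ∧ y ∉ e i) ∧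
      (∀ i < k, f i ∈ B ∧ y ∈ f i ∧ u i ∈ f i ∧ x ∉ f i) ∧
      (∀ i < k, ∀ j < k, i ≠ j → u i ∉ e j ∧ u i ∉ f j) := by
    intro k
    induction k with
    | zero =>
      intro _
      exact ⟨fun _ => x, fun _ => ∅, fun _ => ∅,
        fun i hi => absurd hi (Nat.not_lt_zero i),
        fun i hi => absurd hi (Nat.not_lt_zero i),
        fun i hi => absurd hi (Nat.not_lt_zero i)⟩
    | succ k ih =>
      intro hkt
      obtain ⟨u, e, f, he, hf, hsep⟩ := ih (by omega)
      -- forbidden sets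
      set T : Finset V := (Finset.range k).biUnion (fun i => (e i ∪ f i) \ {x, y}) with hTdef
      set P : Finset V := (B.filter (fun g => x ∈ g ∧ y ∈ g)).biUnion (fun g => g \ {x, y})
        with hPdef
      set BX : Finset V := (Finset.range k).biUnion
        (fun i => ((B.filter (fun g => x ∈ g ∧ u i ∈ g)).erase (e i)).biUnion
          (fun g => g \ ({x, u i} : Finset V))) with hBXdef
      set BY : Finset V := (Finset.range k).biUnion
        (fun i => ((B.filter (fun g => y ∈ g ∧ u i ∈ g)).erase (f i)).biUnion
          (fun g => g \ ({y, u i} : Finset V))) with hBYdef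
      set X : Finset V := T ∪ P ∪ BX ∪ BY with hXdef
      -- u i ≠ x, u i ≠ y for i < k
      have hux : ∀ i < k, u i ≠ x := by
        intro i hi h
        exact (hf i hi).2.2.2 (h ▸ (hf i hi).2.2.1)
      have huy : ∀ i < k, u i ≠ y := by
        intro i hi h
        exact (he i hi).2.2.2 (h ▸ (he i hi).2.2.1)
      -- cardinality bounds
      have hT : T.card ≤ 3 * k := by
        calc T.card ≤ ∑ i ∈ Finset.range k, ((e i ∪ f i) \ {x, y}).card :=
              Finset.card_biUnion_le
          _ ≤ ∑ _i ∈ Finset.range k, 3 := by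
              apply Finset.sum_le_sum
              intro i hi
              have hi' := Finset.mem_range.mp hi
              obtain ⟨heB, hxe, hue, hye⟩ := he i hi'
              obtain ⟨hfB, hyf, huf, hxf⟩ := hf i hi'
              have hsub : ({x, y} : Finset V) ⊆ e i ∪ f i := by
                intro v hv
                simp only [Finset.mem_insert, Finset.mem_singleton] at hv
                rcases hv with rfl | rfl
                · exact Finset.mem_union_left _ hxe
                · exact Finset.mem_union_right _ hyf
              have hcard2 : ({x, y} : Finset V).card = 2 := Finset.card_pair hxy
              rw [Finset.card_sdiff_of_subset hsub, hcard2]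
              have hui := Finset.card_union_add_card_inter (e i) (f i)
              have hpos : 0 < (e i ∩ f i).card :=
                Finset.card_pos.mpr ⟨u i, Finset.mem_inter.mpr ⟨hue, huf⟩⟩
              have h3e := h3 _ heB
              have h3f := h3 _ hfB
              omega
          _ = 3 * k := by simp [mul_comm]
      have hP : P.card ≤ 3 * t - 3 := by
        calc P.card ≤ ∑ g ∈ B.filter (fun g => x ∈ g ∧ y ∈ g), (g \ {x, y}).card :=
              Finset.card_biUnion_le
          _ ≤ ∑ _g ∈ B.filter (fun g => x ∈ g ∧ y ∈ g), 1 := by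
              apply Finset.sum_le_sum
              intro g hg
              obtain ⟨hgB, hxg, hyg⟩ := Finset.mem_filter.mp hg
              have hsub : ({x, y} : Finset V) ⊆ g := by
                intro v hv
                simp only [Finset.mem_insert, Finset.mem_singleton] at hv
                rcases hv with rfl | rfl
                · exact hxg
                · exact hyg
              rw [Finset.card_sdiff_of_subset hsub, Finset.card_pair hxy, h3 _ hgB]
          _ = codeg B x y := by simp [codeg]
          _ ≤ 3 * t - 3 := hcodeg x y hxy
      have hBXb : BX.card ≤ k * (3 * t - 4) := by
        calc BX.card ≤ ∑ i ∈ Finset.range k,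
              (((B.filter (fun g => x ∈ g ∧ u i ∈ g)).erase (e i)).biUnion
                (fun g => g \ ({x, u i} : Finset V))).card := Finset.card_biUnion_le
          _ ≤ ∑ _i ∈ Finset.range k, (3 * t - 4) := by
              apply Finset.sum_le_sum
              intro i hi
              have hi' := Finset.mem_range.mp hi
              obtain ⟨heB, hxe, hue, hye⟩ := he i hi'
              have hxu : x ≠ u i := fun h => hux i hi' h.symm
              have hfil : e i ∈ B.filter (fun g => x ∈ g ∧ u i ∈ g) :=
                Finset.mem_filter.mpr ⟨heB, hxe, hue⟩
              have hcd : (B.filter (fun g => x ∈ g ∧ u i ∈ g)).card ≤ 3 * t - 3 :=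
                hcodeg x (u i) hxu
              calc (((B.filter (fun g => x ∈ g ∧ u i ∈ g)).erase (e i)).biUnion
                    (fun g => g \ ({x, u i} : Finset V))).card
                  ≤ ∑ g ∈ (B.filter (fun g => x ∈ g ∧ u i ∈ g)).erase (e i),
                      (g \ ({x, u i} : Finset V)).card := Finset.card_biUnion_le
                _ ≤ ∑ _g ∈ (B.filter (fun g => x ∈ g ∧ u i ∈ g)).erase (e i), 1 := by
                    apply Finset.sum_le_sum
                    intro g hg
                    obtain ⟨hgB, hxg, hug⟩ :=
                      Finset.mem_filter.mp (Finset.mem_of_mem_erase hg)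
                    have hsub : ({x, u i} : Finset V) ⊆ g := by
                      intro v hv
                      simp only [Finset.mem_insert, Finset.mem_singleton] at hv
                      rcases hv with rfl | rfl
                      · exact hxg
                      · exact hug
                    rw [Finset.card_sdiff_of_subset hsub, Finset.card_pair hxu, h3 _ hgB]
                _ = ((B.filter (fun g => x ∈ g ∧ u i ∈ g)).erase (e i)).card := by simp
                _ = (B.filter (fun g => x ∈ g ∧ u i ∈ g)).card - 1 :=
                    Finset.card_erase_of_mem hfil
                _ ≤ 3 * t - 4 := by omega
          _ = k * (3 * t - 4) := by simp
      have hBYb : BY.card ≤ k * (3 * t - 4) := by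
        calc BY.card ≤ ∑ i ∈ Finset.range k,
              (((B.filter (fun g => y ∈ g ∧ u i ∈ g)).erase (f i)).biUnion
                (fun g => g \ ({y, u i} : Finset V))).card := Finset.card_biUnion_le
          _ ≤ ∑ _i ∈ Finset.range k, (3 * t - 4) := by
              apply Finset.sum_le_sum
              intro i hi
              have hi' := Finset.mem_range.mp hi
              obtain ⟨hfB, hyf, huf, hxf⟩ := hf i hi'
              have hyu : y ≠ u i := fun h => huy i hi' h.symm
              have hfil : f i ∈ B.filter (fun g => y ∈ g ∧ u i ∈ g) :=
                Finset.mem_filter.mpr ⟨hfB, hyf, huf⟩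
              have hcd : (B.filter (fun g => y ∈ g ∧ u i ∈ g)).card ≤ 3 * t - 3 :=
                hcodeg y (u i) hyu
              calc (((B.filter (fun g => y ∈ g ∧ u i ∈ g)).erase (f i)).biUnion
                    (fun g => g \ ({y, u i} : Finset V))).card
                  ≤ ∑ g ∈ (B.filter (fun g => y ∈ g ∧ u i ∈ g)).erase (f i),
                      (g \ ({y, u i} : Finset V)).card := Finset.card_biUnion_le
                _ ≤ ∑ _g ∈ (B.filter (fun g => y ∈ g ∧ u i ∈ g)).erase (f i), 1 := by
                    apply Finset.sum_le_sum
                    intro g hg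
                    obtain ⟨hgB, hyg, hug⟩ :=
                      Finset.mem_filter.mp (Finset.mem_of_mem_erase hg)
                    have hsub : ({y, u i} : Finset V) ⊆ g := by
                      intro v hv
                      simp only [Finset.mem_insert, Finset.mem_singleton] at hv
                      rcases hv with rfl | rfl
                      · exact hyg
                      · exact hug
                    rw [Finset.card_sdiff_of_subset hsub, Finset.card_pair hyu, h3 _ hgB]
                _ = ((B.filter (fun g => y ∈ g ∧ u i ∈ g)).erase (f i)).card := by simp
                _ = (B.filter (fun g => y ∈ g ∧ u i ∈ g)).card - 1 :=
                    Finset.card_erase_of_mem hfil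
                _ ≤ 3 * t - 4 := by omega
          _ = k * (3 * t - 4) := by simp
      have hXcard : X.card ≤ (t - 1) * (6 * t - 2) := by
        have h1 := Finset.card_union_le (T ∪ P ∪ BX) BY
        have h2 := Finset.card_union_le (T ∪ P) BX
        have h3' := Finset.card_union_le T P
        have harith := arith_bound t k ht (by omega)
        calc X.card ≤ 3 * k + (3 * t - 3) + (k * (3 * t - 4) + k * (3 * t - 4)) := by
              rw [hXdef]; omega
          _ ≤ (t - 1) * (6 * t - 2) := harith
      -- find a fresh common neighbor
      have hnone : ((nbhd B x ∩ nbhd B y) \ X).Nonempty := by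
        by_contra hcon
        rw [Finset.not_nonempty_iff_eq_empty, Finset.sdiff_eq_empty_iff_subset] at hcon
        have := Finset.card_le_card hcon
        omega
      obtain ⟨u', hu'⟩ := hnone
      have hu'N : u' ∈ nbhd B x ∩ nbhd B y := (Finset.mem_sdiff.mp hu').1
      have hu'X : u' ∉ X := (Finset.mem_sdiff.mp hu').2
      have hu'x0 := (Finset.mem_inter.mp hu'N).1
      have hu'y0 := (Finset.mem_inter.mp hu'N).2
      rw [nbhd, Finset.mem_filter] at hu'x0 hu'y0
      obtain ⟨-, hu'x, e', he'B, hxe', hu'e'⟩ := hu'x0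
      obtain ⟨-, hu'y, f', hf'B, hyf', hu'f'⟩ := hu'y0
      have hu'T : u' ∉ T := by
        intro h
        apply hu'X
        rw [hXdef]
        exact Finset.mem_union_left _ (Finset.mem_union_left _ (Finset.mem_union_left _ h))
      have hu'P : u' ∉ P := by
        intro h
        apply hu'X
        rw [hXdef]
        exact Finset.mem_union_left _ (Finset.mem_union_left _ (Finset.mem_union_right _ h))
      have hu'BX : u' ∉ BX := by
        intro h
        apply hu'X
        rw [hXdef]
        exact Finset.mem_union_left _ (Finset.mem_union_right _ h)
      have hu'BY : u' ∉ BY := by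
        intro h
        apply hu'X
        rw [hXdef]
        exact Finset.mem_union_right _ h
      -- u' avoids all old edges
      have hu'ef : ∀ i < k, u' ∉ e i ∧ u' ∉ f i := by
        intro i hi
        constructor
        · intro hmem
          apply hu'T
          rw [hTdef]
          exact Finset.mem_biUnion.mpr ⟨i, Finset.mem_range.mpr hi,
            Finset.mem_sdiff.mpr ⟨Finset.mem_union_left _ hmem, by simp [hu'x, hu'y]⟩⟩
        · intro hmem
          apply hu'T
          rw [hTdef]
          exact Finset.mem_biUnion.mpr ⟨i, Finset.mem_range.mpr hi,
            Finset.mem_sdiff.mpr ⟨Finset.mem_union_right _ hmem, by simp [hu'x, hu'y]⟩⟩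
      -- any x-edge of u' avoids y and all old u i
      have factx : ∀ g ∈ B, x ∈ g → u' ∈ g → y ∉ g ∧ ∀ i < k, u i ∉ g := by
        intro g hgB hxg hu'g
        have hyg : y ∉ g := by
          intro hyg
          apply hu'P
          rw [hPdef]
          exact Finset.mem_biUnion.mpr ⟨g, Finset.mem_filter.mpr ⟨hgB, hxg, hyg⟩,
            Finset.mem_sdiff.mpr ⟨hu'g, by simp [hu'x, hu'y]⟩⟩
        refine ⟨hyg, ?_⟩
        intro i hi hug
        apply hu'BX
        rw [hBXdef]
        refine Finset.mem_biUnion.mpr ⟨i, Finset.mem_range.mpr hi, ?_⟩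
        refine Finset.mem_biUnion.mpr ⟨g, Finset.mem_erase.mpr
          ⟨fun h => (hu'ef i hi).1 (h ▸ hu'g), Finset.mem_filter.mpr ⟨hgB, hxg, hug⟩⟩, ?_⟩
        refine Finset.mem_sdiff.mpr ⟨hu'g, ?_⟩
        simp only [Finset.mem_insert, Finset.mem_singleton]
        push_neg
        exact ⟨hu'x, fun h => (hu'ef i hi).1 (h ▸ (he i hi).2.2.1)⟩
      have facty : ∀ g ∈ B, y ∈ g → u' ∈ g → x ∉ g ∧ ∀ i < k, u i ∉ g := by
        intro g hgB hyg hu'g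
        have hxg : x ∉ g := by
          intro hxg
          apply hu'P
          rw [hPdef]
          exact Finset.mem_biUnion.mpr ⟨g, Finset.mem_filter.mpr ⟨hgB, hxg, hyg⟩,
            Finset.mem_sdiff.mpr ⟨hu'g, by simp [hu'x, hu'y]⟩⟩
        refine ⟨hxg, ?_⟩
        intro i hi hug
        apply hu'BY
        rw [hBYdef]
        refine Finset.mem_biUnion.mpr ⟨i, Finset.mem_range.mpr hi, ?_⟩
        refine Finset.mem_biUnion.mpr ⟨g, Finset.mem_erase.mpr
          ⟨fun h => (hu'ef i hi).2 (h ▸ hu'g), Finset.mem_filter.mpr ⟨hgB, hyg, hug⟩⟩, ?_⟩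
        refine Finset.mem_sdiff.mpr ⟨hu'g, ?_⟩
        simp only [Finset.mem_insert, Finset.mem_singleton]
        push_neg
        exact ⟨hu'y, fun h => (hu'ef i hi).2 (h ▸ (hf i hi).2.2.1)⟩
      -- extend the sequences
      refine ⟨fun i => if i = k then u' else u i,
              fun i => if i = k then e' else e i,
              fun i => if i = k then f' else f i, ?_, ?_, ?_⟩
      · intro i hi
        by_cases h : i = k
        · simp only [if_pos h]
          exact ⟨he'B, hxe', hu'e', (factx e' he'B hxe' hu'e').1⟩
        · have hi' : i < k := by omega
          simp only [if_neg h]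
          exact he i hi'
      · intro i hi
        by_cases h : i = k
        · simp only [if_pos h]
          exact ⟨hf'B, hyf', hu'f', (facty f' hf'B hyf' hu'f').1⟩
        · have hi' : i < k := by omega
          simp only [if_neg h]
          exact hf i hi'
      · intro i hi j hj hij
        by_cases h1 : i = k <;> by_cases h2 : j = k
        · exact absurd (h1.trans h2.symm) hij
        · have hj' : j < k := by omega
          simp only [if_pos h1, if_neg h2]
          exact hu'ef j hj'
        · have hi' : i < k := by omega
          simp only [if_neg h1, if_pos h2]
          exact ⟨(factx e' he'B hxe' hu'e').2 i hi', (facty f' hf'B hyf' hu'f').2 i hi'⟩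
        · have hi' : i < k := by omega
          have hj' : j < k := by omega
          simp only [if_neg h1, if_neg h2]
          exact hsep i hi' j hj' hij
  obtain ⟨u, e, f, he, hf, hsep⟩ := key t le_rfl
  -- build the trace
  have hult : ∀ i : Fin t, (i : ℕ) < t := fun i => i.isLt
  refine ⟨x, y, fun i => u i, fun i => e i, fun i => f i, hxy, ?_, ?_, ?_, ?_, ?_, ?_, ?_, ?_, ?_⟩
  · -- injectivity of u
    intro i j hij
    by_contra hne
    have hne' : (i : ℕ) ≠ (j : ℕ) := fun h => hne (Fin.ext h)
    have hij' : u (i : ℕ) = u (j : ℕ) := hij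
    have hmem : u (i : ℕ) ∈ e (j : ℕ) := by
      rw [hij']; exact (he j (hult j)).2.2.1
    exact (hsep i (hult i) j (hult j) hne').1 hmem
  · intro i
    exact ⟨fun h => (hf i (hult i)).2.2.2 (h ▸ (hf i (hult i)).2.2.1),
           fun h => (he i (hult i)).2.2.2 (h ▸ (he i (hult i)).2.2.1)⟩
  · exact fun i => (he i (hult i)).1
  · exact fun i => (hf i (hult i)).1
  · -- injectivity of e
    intro i j hij
    by_contra hne
    have hne' : (i : ℕ) ≠ (j : ℕ) := fun h => hne (Fin.ext h)
    have hij' : e (i : ℕ) = e (j : ℕ) := hij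
    have hmem : u (i : ℕ) ∈ e (j : ℕ) := by
      rw [← hij']; exact (he i (hult i)).2.2.1
    exact (hsep i (hult i) j (hult j) hne').1 hmem
  · -- injectivity of f
    intro i j hij
    by_contra hne
    have hne' : (i : ℕ) ≠ (j : ℕ) := fun h => hne (Fin.ext h)
    have hij' : f (i : ℕ) = f (j : ℕ) := hij
    have hmem : u (i : ℕ) ∈ f (j : ℕ) := by
      rw [← hij']; exact (hf i (hult i)).2.2.1
    exact (hsep i (hult i) j (hult j) hne').2 hmem
  · -- e i ≠ f j
    intro i j h
    have h' : e (i : ℕ) = f (j : ℕ) := h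
    have hmem : x ∈ f (j : ℕ) := by
      rw [← h']; exact (he i (hult i)).2.1
    exact (hf j (hult j)).2.2.2 hmem
  · -- e-intersection
    intro i
    ext v
    simp only [Finset.mem_inter, Finset.mem_insert, Finset.mem_singleton,
      Finset.mem_image, Finset.mem_univ, true_and]
    constructor
    · rintro ⟨hve, rfl | rfl | ⟨j, rfl⟩⟩
      · exact Or.inl rfl
      · exact absurd hve (he i (hult i)).2.2.2
      · by_cases h : (j : ℕ) = (i : ℕ)
        · exact Or.inr (by rw [h])
        · exact absurd hve (hsep j (hult j) i (hult i) h).1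
    · rintro (h | h)
      · refine ⟨?_, Or.inl h⟩
        rw [h]; exact (he i (hult i)).2.1
      · refine ⟨?_, Or.inr (Or.inr ⟨i, h.symm⟩)⟩
        rw [h]; exact (he i (hult i)).2.2.1
  · -- f-intersection
    intro i
    ext v
    simp only [Finset.mem_inter, Finset.mem_insert, Finset.mem_singleton,
      Finset.mem_image, Finset.mem_univ, true_and]
    constructor
    · rintro ⟨hvf, rfl | rfl | ⟨j, rfl⟩⟩
      · exact absurd hvf (hf i (hult i)).2.2.2
      · exact Or.inl rfl
      · by_cases h : (j : ℕ) = (i : ℕ)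
        · exact Or.inr (by rw [h])
        · exact absurd hvf (hsep j (hult j) i (hult i) h).2
    · rintro (h | h)
      · refine ⟨?_, Or.inr (Or.inl h)⟩
        rw [h]; exact (hf i (hult i)).2.1
      · refine ⟨?_, Or.inr (Or.inr ⟨i, h.symm⟩)⟩
        rw [h]; exact (hf i (hult i)).2.2.1
end
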